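/- Let d ≥ 2 and let μ be a probability measure on {0,1}^{ℤ^d} (with the product σ-algebra) that is positively associated and invariant under all translations of ℤ^d and under all linear isometries of ℤ^d generated by coordinate permutations and coordinate sign flips. Suppose that κ := inf_{r ≥ 1} μ({ω : some ω-open connected set intersects both B_r and ∂B_{2r}}) > 0. Then there exist a constant C < ∞ depending only on d and a constant c(κ) > 0 depending only on d and κ such that for every integer r ≥ 1 and all x, y ∈ B_r, μ({ω : x is connected to y by an ω-open path inside B_{2r}}) ≥ c(κ)·r^{−C}. -/

import Mathlib

open MeasureTheory

/-- Nearest-neighbor adjacency on `ℤ^d`: Euclidean distance one. -/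
def nnAdj {d : ℕ} (x y : Fin d → ℤ) : Prop := ∑ i, (x i - y i) ^ 2 = 1

/-- The box `B_r = ([-r,r] ∩ ℤ)^d`. -/
def latBox (d r : ℕ) : Set (Fin d → ℤ) := {x | ∀ i, |x i| ≤ (r : ℤ)}

/-- The set `∂B_r = {x ∈ ℤ^d : |x|_∞ = r}`. -/
def latSphere (d r : ℕ) : Set (Fin d → ℤ) :=
  {x | (∀ i, |x i| ≤ (r : ℤ)) ∧ ∃ i, |x i| = (r : ℤ)}

/-- The set of `ω`-open sites. -/
def openSites {d : ℕ} (ω : (Fin d → ℤ) → Bool) : Set (Fin d → ℤ) := {x | ω x = true}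

/-- `x` and `y` are joined by a nearest-neighbor path lying in `A`. -/
def LatJoined {d : ℕ} (A : Set (Fin d → ℤ)) (x y : Fin d → ℤ) : Prop :=
  ∃ l : List (Fin d → ℤ), l.Chain' nnAdj ∧ l.head? = some x ∧ l.getLast? = some y ∧
    ∀ z ∈ l, z ∈ A

/-- A set is connected if any two of its points are joined by a path inside it. -/
def LatConn {d : ℕ} (A : Set (Fin d → ℤ)) : Prop := ∀ x ∈ A, ∀ y ∈ A, LatJoined A x y

/-- The event that `x` is connected to `y` by an `ω`-open path inside `A`. -/
def connEvent {d : ℕ} (A : Set (Fin d → ℤ)) (x y : Fin d → ℤ) :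
    Set ((Fin d → ℤ) → Bool) :=
  {ω | LatJoined (A ∩ openSites ω) x y}

/-- The event that some `ω`-open connected set intersects both `B_r` and `∂B_{2r}`. -/
def crossEvent (d r : ℕ) : Set ((Fin d → ℤ) → Bool) :=
  {ω | ∃ A : Set (Fin d → ℤ), A ⊆ openSites ω ∧ LatConn A ∧
    (A ∩ latBox d r).Nonempty ∧ (A ∩ latSphere d (2 * r)).Nonempty}

/-- Positive association: `μ(E ∩ F) ≥ μ(E)μ(F)` for increasing events `E`, `F`. -/
def PosAssoc {d : ℕ} (μ : Measure ((Fin d → ℤ) → Bool)) : Prop :=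
  ∀ E F : Set ((Fin d → ℤ) → Bool), MeasurableSet E → MeasurableSet F →
    (∀ ω ω' : (Fin d → ℤ) → Bool, (∀ x, ω x ≤ ω' x) → ω ∈ E → ω' ∈ E) →
    (∀ ω ω' : (Fin d → ℤ) → Bool, (∀ x, ω x ≤ ω' x) → ω ∈ F → ω' ∈ F) →
    μ E * μ F ≤ μ (E ∩ F)

/-!
A union bound over the starting point of a crossing of scale `s` and over the point where it
first leaves the box of radius `s` around that starting point shows, by translation invariance,
that `0` is joined inside `B_s` to some `w ∈ ∂B_s` with probability at least
`κ (2s+1)^(-2d)`. If `|w i₀| = s`, two signed permutations of `w` add up to `±2s e_i`; gluing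
translates of the two paths by positive association joins `z` to `z ± 2s e_i` inside `B_{2r}`
with probability at least the square of that bound. The first edge of a crossing of scale `1`
similarly handles steps of length one. Each coordinate of `x` is moved to that of `y` in a
bounded number of such steps, so gluing `O(d)` steps gives a bound `κ^{O(d)} r^{-O(d²)}`.
-/

open Relation
open scoped ENNReal

variable {d : ℕ} {μ : Measure ((Fin d → ℤ) → Bool)}

lemma sum_sq_eq_one_iff {ι : Type*} [Fintype ι] [DecidableEq ι] {f : ι → ℤ} :
    ∑ i, f i ^ 2 = 1 ↔ ∃ j ζ, (ζ = 1 ∨ ζ = -1) ∧ f = Pi.single j ζ := by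
  constructor
  · intro h
    obtain ⟨j, hj⟩ : ∃ j, f j ≠ 0 := by
      by_contra! h0
      simp [h0] at h
    have hsplit := Finset.add_sum_erase Finset.univ (fun i => f i ^ 2) (Finset.mem_univ j)
    have hrest : 0 ≤ ∑ i ∈ Finset.univ.erase j, f i ^ 2 :=
      Finset.sum_nonneg fun i _ => sq_nonneg _
    have hfj : f j ^ 2 = 1 := by nlinarith [Int.one_le_abs hj, sq_abs (f j)]
    have hzero : ∀ i ∈ Finset.univ.erase j, f i ^ 2 = 0 :=
      (Finset.sum_eq_zero_iff_of_nonneg fun i _ => sq_nonneg _).mp (by linarith)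
    refine ⟨j, f j, sq_eq_one_iff.mp hfj, funext fun i => ?_⟩
    by_cases hi : i = j
    · simp [hi]
    · simpa [hi] using hzero i (by simp [hi])
  · rintro ⟨j, ζ, hζ, rfl⟩
    rcases hζ with rfl | rfl <;> simp [Pi.single_apply]

lemma nnAdj_iff_eq_add_single {x y : Fin d → ℤ} :
    nnAdj x y ↔ ∃ j ζ, (ζ = 1 ∨ ζ = -1) ∧ y = x + Pi.single j ζ := by
  have h : nnAdj x y ↔ ∑ i, (y - x) i ^ 2 = 1 := by
    simp only [nnAdj, Pi.sub_apply, ← neg_sub (y _), neg_sq]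
  simp only [h, sum_sq_eq_one_iff, sub_eq_iff_eq_add']

lemma nnAdj_add_left (a x y : Fin d → ℤ) : nnAdj (a + x) (a + y) ↔ nnAdj x y := by
  simp only [nnAdj, Pi.add_apply, add_sub_add_left_eq_sub]

def LatStep (A : Set (Fin d → ℤ)) (u v : Fin d → ℤ) : Prop := nnAdj u v ∧ v ∈ A

lemma latJoined_iff {A : Set (Fin d → ℤ)} {x y : Fin d → ℤ} :
    LatJoined A x y ↔ x ∈ A ∧ ReflTransGen (LatStep A) x y := by
  constructor
  · rintro ⟨_ | ⟨x', t⟩, hc, hh, hl, hm⟩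
    · simp at hh
    obtain rfl : x = x' := by simpa [eq_comm] using hh
    refine ⟨hm x (by simp), List.relationReflTransGen_of_exists_isChain_cons t
      (hc.imp_of_mem_imp fun a b _ hb hab => ⟨hab, hm b hb⟩) ?_⟩
    simpa [List.getLast?_eq_some_getLast] using hl
  · rintro ⟨hx, h⟩
    obtain ⟨t, hc, hl⟩ := List.exists_isChain_cons_of_relationReflTransGen h
    refine ⟨x :: t, hc.imp fun _ _ => And.left, rfl,
      by simp [List.getLast?_eq_some_getLast, hl], ?_⟩
    intro z hz
    rcases List.mem_cons.mp hz with rfl | hz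
    · exact hx
    · exact hc.cons_induction (· ∈ A) t (fun _ _ h _ => h.2) hx z hz

lemma latJoined_self {A : Set (Fin d → ℤ)} {x : Fin d → ℤ} (hx : x ∈ A) : LatJoined A x x :=
  latJoined_iff.mpr ⟨hx, .refl⟩

namespace LatJoined

variable {A B : Set (Fin d → ℤ)} {x y z : Fin d → ℤ}

lemma mem_left (h : LatJoined A x y) : x ∈ A := (latJoined_iff.mp h).1

lemma mono (hAB : A ⊆ B) (h : LatJoined A x y) : LatJoined B x y := by
  obtain ⟨hx, h⟩ := latJoined_iff.mp h
  exact latJoined_iff.mpr ⟨hAB hx, ReflTransGen.mono (fun _ _ huv => ⟨huv.1, hAB huv.2⟩) _ _ h⟩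

lemma trans (hxy : LatJoined A x y) (hyz : LatJoined A y z) : LatJoined A x z :=
  latJoined_iff.mpr ⟨hxy.mem_left, (latJoined_iff.mp hxy).2.trans (latJoined_iff.mp hyz).2⟩

lemma image {g : (Fin d → ℤ) ≃ (Fin d → ℤ)} (hg : ∀ a b, nnAdj (g a) (g b) ↔ nnAdj a b)
    (h : LatJoined A x y) : LatJoined (g '' A) (g x) (g y) := by
  obtain ⟨hx, h⟩ := latJoined_iff.mp h
  exact latJoined_iff.mpr ⟨Set.mem_image_of_mem g hx,
    h.lift g fun a b hab => ⟨(hg a b).mpr hab.1, Set.mem_image_of_mem g hab.2⟩⟩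

end LatJoined

lemma latJoined_image_iff {g : (Fin d → ℤ) ≃ (Fin d → ℤ)}
    (hg : ∀ a b, nnAdj (g a) (g b) ↔ nnAdj a b) {A : Set (Fin d → ℤ)} {x y : Fin d → ℤ} :
    LatJoined (g '' A) (g x) (g y) ↔ LatJoined A x y := by
  refine ⟨fun h => ?_, LatJoined.image hg⟩
  have hg' : ∀ a b, nnAdj (g.symm a) (g.symm b) ↔ nnAdj a b := fun a b => by
    rw [← hg, g.apply_symm_apply, g.apply_symm_apply]
  simpa [Equiv.symm_image_image] using h.image hg'

lemma Relation.ReflTransGen.exists_exit {α : Type*} {r : α → α → Prop} {p : α → Prop} {a b : α}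
    (h : ReflTransGen r a b) (ha : p a) (hb : ¬ p b) :
    ∃ u v, ReflTransGen (fun x y => r x y ∧ p y) a u ∧ p u ∧ r u v ∧ ¬ p v := by
  induction h using ReflTransGen.head_induction_on with
  | refl => exact absurd ha hb
  | head hac _ ih =>
    rename_i a c _
    by_cases hc : p c
    · obtain ⟨u, v, hcu, hu, huv, hv⟩ := ih hc
      exact ⟨u, v, .head ⟨hac, hc⟩ hcu, hu, huv, hv⟩
    · exact ⟨a, c, .refl, ha, hac, hc⟩

lemma mem_image_add_latBox {a z : Fin d → ℤ} {s : ℕ} :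
    z ∈ (a + ·) '' latBox d s ↔ ∀ i, |z i - a i| ≤ s := by
  simp [Set.image_add_left, latBox, neg_add_eq_sub]

lemma abs_sub_le_one_of_nnAdj {u v : Fin d → ℤ} (h : nnAdj u v) (i : Fin d) :
    |v i - u i| ≤ 1 := by
  obtain ⟨j, ζ, hζ, rfl⟩ := nnAdj_iff_eq_add_single.mp h
  by_cases hi : i = j
  · subst hi; rcases hζ with rfl | rfl <;> simp
  · simp [hi]

lemma LatJoined.exists_exit {O : Set (Fin d → ℤ)} {a b : Fin d → ℤ} {s : ℕ}
    (h : LatJoined O a b) (hs : 0 < s) (hb : ∃ i, (s : ℤ) ≤ |b i - a i|) :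
    ∃ w ∈ latSphere d s, LatJoined ((a + ·) '' latBox d s ∩ O) a (a + w) := by
  obtain ⟨ha, hab⟩ := latJoined_iff.mp h
  obtain ⟨u, v, hau, hu, ⟨huv, hv⟩, hvout⟩ :=
    hab.exists_exit (p := fun z => ∀ i, |z i - a i| < s) (fun _ => by simpa using hs)
      (by simpa using hb)
  have hvbox : ∀ i, |v i - a i| ≤ s := fun i => by
    have h1 := abs_le.mp (abs_sub_le_one_of_nnAdj huv i)
    have h2 := abs_lt.mp (hu i)
    rw [abs_le]; omega
  obtain ⟨i, hi⟩ : ∃ i, (s : ℤ) ≤ |v i - a i| := by simpa using hvout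
  refine ⟨v - a, ⟨hvbox, i, le_antisymm (hvbox i) hi⟩, ?_⟩
  rw [add_sub_cancel]
  refine latJoined_iff.mpr ⟨⟨mem_image_add_latBox.mpr (by simp), ha⟩, ?_⟩
  refine ReflTransGen.tail (ReflTransGen.mono ?_ _ _ hau) ⟨huv, mem_image_add_latBox.mpr hvbox, hv⟩
  exact fun x y ⟨⟨hxy, hy⟩, hyin⟩ => ⟨hxy, mem_image_add_latBox.mpr fun i => (hyin i).le, hy⟩

lemma measurableSet_connEvent (A : Set (Fin d → ℤ)) (x y : Fin d → ℤ) :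
    MeasurableSet (connEvent A x y) := by
  have h : connEvent A x y = ⋃ (l : List (Fin d → ℤ)) (_ : l.IsChain nnAdj ∧ l.head? = some x ∧
      l.getLast? = some y ∧ ∀ z ∈ l, z ∈ A), {ω | ∀ z ∈ l, ω z = true} := by
    ext ω
    simp only [connEvent, LatJoined, openSites, Set.mem_inter_iff, Set.mem_ofPred_eq,
      Set.mem_iUnion, exists_prop, forall_and]
    tauto
  rw [h]
  exact .iUnion fun l => .iUnion fun _ => by measurability

lemma connEvent_mono {A B : Set (Fin d → ℤ)} (hAB : A ⊆ B) (x y : Fin d → ℤ) :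
    connEvent A x y ⊆ connEvent B x y :=
  fun _ h => h.mono (Set.inter_subset_inter_left _ hAB)

lemma connEvent_increasing {A : Set (Fin d → ℤ)} {x y : Fin d → ℤ} {ω ω' : (Fin d → ℤ) → Bool}
    (hle : ∀ z, ω z ≤ ω' z) (h : ω ∈ connEvent A x y) : ω' ∈ connEvent A x y :=
  -- `≤` on `Bool` is implication.
  h.mono <| Set.inter_subset_inter_right _ fun z hz => hle z hz

lemma PosAssoc.mul_le_measure_connEvent (hμ : PosAssoc μ) {A : Set (Fin d → ℤ)}
    {x y z : Fin d → ℤ} {α β : ℝ≥0∞} (hxy : α ≤ μ (connEvent A x y))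
    (hyz : β ≤ μ (connEvent A y z)) : α * β ≤ μ (connEvent A x z) :=
  calc α * β ≤ μ (connEvent A x y) * μ (connEvent A y z) := mul_le_mul' hxy hyz
    _ ≤ μ (connEvent A x y ∩ connEvent A y z) :=
      hμ _ _ (measurableSet_connEvent _ _ _) (measurableSet_connEvent _ _ _)
        (fun _ _ => connEvent_increasing) (fun _ _ => connEvent_increasing)
    _ ≤ μ (connEvent A x z) := measure_mono fun _ h => h.1.trans h.2

lemma PosAssoc.pow_le_measure_connEvent (hμ : PosAssoc μ) {A : Set (Fin d → ℤ)}
    {p : ℕ → Fin d → ℤ} {b : ℝ≥0∞} {n : ℕ} (hn : 0 < n)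
    (hstep : ∀ k < n, b ≤ μ (connEvent A (p k) (p (k + 1)))) :
    b ^ n ≤ μ (connEvent A (p 0) (p n)) := by
  induction n with
  | zero => exact absurd hn (lt_irrefl 0)
  | succ n ih =>
    rcases Nat.eq_zero_or_pos n with rfl | hn
    · simpa using hstep 0 one_pos
    · rw [pow_succ]
      exact hμ.mul_le_measure_connEvent (ih hn fun k hk => hstep k (by omega)) (hstep n (by omega))

lemma measure_connEvent_image {g : (Fin d → ℤ) ≃ (Fin d → ℤ)}
    (hg : ∀ a b, nnAdj (g a) (g b) ↔ nnAdj a b)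
    (hμ : μ.map (fun ω z => ω (g z)) = μ) (A : Set (Fin d → ℤ)) (x y : Fin d → ℤ) :
    μ (connEvent (g '' A) (g x) (g y)) = μ (connEvent A x y) := by
  conv_rhs => rw [← hμ]
  rw [Measure.map_apply (by fun_prop) (measurableSet_connEvent _ _ _)]
  congr 1
  ext ω
  change _ ↔ LatJoined (A ∩ g ⁻¹' openSites ω) x y
  rw [← latJoined_image_iff hg, Set.image_inter_preimage]
  rfl

def ShiftInvariant (μ : Measure ((Fin d → ℤ) → Bool)) : Prop :=
  ∀ v : Fin d → ℤ, Measure.map (fun ω : (Fin d → ℤ) → Bool => fun x => ω (x + v)) μ = μ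

def SignedPermInvariant (μ : Measure ((Fin d → ℤ) → Bool)) : Prop :=
  ∀ σ : Equiv.Perm (Fin d), ∀ ε : Fin d → ℤ, (∀ i, ε i = 1 ∨ ε i = -1) →
    Measure.map (fun ω : (Fin d → ℤ) → Bool => fun x => ω (fun i => ε i * x (σ i))) μ = μ

lemma ShiftInvariant.measure_connEvent (hμ : ShiftInvariant μ) (a : Fin d → ℤ)
    (A : Set (Fin d → ℤ)) (x y : Fin d → ℤ) :
    μ (connEvent ((a + ·) '' A) (a + x) (a + y)) = μ (connEvent A x y) := by
  refine measure_connEvent_image (g := Equiv.addLeft a) (nnAdj_add_left a) ?_ A x y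
  simpa only [Equiv.coe_addLeft, add_comm a] using hμ a

def signedPerm (σ : Equiv.Perm (Fin d)) (ε : Fin d → ℤ) (hε : ∀ i, ε i = 1 ∨ ε i = -1) :
    (Fin d → ℤ) ≃ (Fin d → ℤ) where
  toFun x i := ε i * x (σ i)
  invFun y j := ε (σ.symm j) * y (σ.symm j)
  left_inv x := funext fun j => by rcases hε (σ.symm j) with h | h <;> simp [h]
  right_inv y := funext fun i => by rcases hε i with h | h <;> simp [h]

section signedPerm

variable {σ : Equiv.Perm (Fin d)} {ε : Fin d → ℤ} {hε : ∀ i, ε i = 1 ∨ ε i = -1}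

lemma signedPerm_apply (x : Fin d → ℤ) (i : Fin d) :
    signedPerm σ ε hε x i = ε i * x (σ i) := rfl

lemma abs_signedPerm_apply (x : Fin d → ℤ) (i : Fin d) :
    |signedPerm σ ε hε x i| = |x (σ i)| := by
  rcases hε i with h | h <;> simp [signedPerm_apply, h]

lemma nnAdj_signedPerm (a b : Fin d → ℤ) :
    nnAdj (signedPerm σ ε hε a) (signedPerm σ ε hε b) ↔ nnAdj a b := by
  have h : ∀ i, (signedPerm σ ε hε a i - signedPerm σ ε hε b i) ^ 2 = (a (σ i) - b (σ i)) ^ 2 :=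
    fun i => by rcases hε i with h | h <;> simp only [signedPerm_apply, h] <;> ring
  simp only [nnAdj, h, Equiv.sum_comp σ fun j => (a j - b j) ^ 2]

lemma signedPerm_zero : signedPerm σ ε hε 0 = 0 := funext fun i => by simp [signedPerm_apply]

lemma signedPerm_mem_latBox_iff {x : Fin d → ℤ} {s : ℕ} :
    signedPerm σ ε hε x ∈ latBox d s ↔ x ∈ latBox d s := by
  simp only [latBox, Set.mem_ofPred_eq, abs_signedPerm_apply]
  exact σ.forall_congr_right (q := fun j => |x j| ≤ s)

lemma signedPerm_image_latBox (s : ℕ) : signedPerm σ ε hε '' latBox d s = latBox d s := by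
  ext x
  rw [Set.mem_image_equiv, ← signedPerm_mem_latBox_iff (σ := σ) (hε := hε), Equiv.apply_symm_apply]

lemma SignedPermInvariant.measure_connEvent_latBox (hμ : SignedPermInvariant μ) (s : ℕ)
    (w : Fin d → ℤ) :
    μ (connEvent (latBox d s) 0 (signedPerm σ ε hε w)) = μ (connEvent (latBox d s) 0 w) := by
  have h := measure_connEvent_image (g := signedPerm σ ε hε) nnAdj_signedPerm (hμ σ ε hε)
    (latBox d s) 0 w
  rwa [signedPerm_image_latBox, signedPerm_zero] at h

lemma signedPerm_single (i j : Fin d) (c : ℤ) :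
    signedPerm (Equiv.swap i j) ε hε (Pi.single j c) = Pi.single i (ε i * c) := by
  funext k
  by_cases hk : k = i
  · subst hk; simp [signedPerm_apply]
  · simp [signedPerm_apply, hk, Equiv.swap_apply_eq_iff]

lemma exists_signedPerm_add_eq_single {w : Fin d → ℤ} {i₀ : Fin d} {q : ℤ}
    (hw : |w i₀| = |q|) (i : Fin d) :
    ∃ ε₁ ε₂ : Fin d → ℤ, ∃ (h₁ : ∀ k, ε₁ k = 1 ∨ ε₁ k = -1) (h₂ : ∀ k, ε₂ k = 1 ∨ ε₂ k = -1),
      signedPerm (Equiv.swap i i₀) ε₁ h₁ w + signedPerm (Equiv.swap i i₀) ε₂ h₂ w =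
        Pi.single i (2 * q) := by
  obtain ⟨δ, hδ, hδq⟩ : ∃ δ : ℤ, (δ = 1 ∨ δ = -1) ∧ δ * w i₀ = q := by
    rcases abs_eq_abs.mp hw with h | h
    · exact ⟨1, Or.inl rfl, by simp [h]⟩
    · exact ⟨-1, Or.inr rfl, by simp [h]⟩
  refine ⟨fun k => if k = i then δ else 1, fun k => if k = i then δ else -1,
    fun k => by dsimp only; split_ifs <;> simp [hδ],
    fun k => by dsimp only; split_ifs <;> simp [hδ], ?_⟩
  funext k
  by_cases hk : k = i
  · subst hk
    simp only [Pi.add_apply, signedPerm_apply, ↓reduceIte, Equiv.swap_apply_left, hδq,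
      Pi.single_eq_same]
    ring
  · simp [signedPerm_apply, hk]

end signedPerm

lemma exists_div_card_le_measure_of_subset_biUnion {Ω ι : Type*} [MeasurableSpace Ω]
    (ν : Measure Ω) {S : Finset ι} (hS : S.Nonempty) {E : Set Ω} {F : ι → Set Ω}
    (hE : E ⊆ ⋃ i ∈ S, F i) : ∃ i ∈ S, ν E / S.card ≤ ν (F i) := by
  refine ENNReal.exists_le_of_sum_le hS ?_
  calc ∑ _i ∈ S, ν E / S.card = S.card * (ν E / S.card) := by
        rw [Finset.sum_const, nsmul_eq_mul]
    _ ≤ ν E := ENNReal.mul_div_le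
    _ ≤ ν (⋃ i ∈ S, F i) := measure_mono hE
    _ ≤ ∑ i ∈ S, ν (F i) := measure_biUnion_finset_le S F

noncomputable def latBoxFinset (d s : ℕ) : Finset (Fin d → ℤ) :=
  Fintype.piFinset fun _ => Finset.Icc (-(s : ℤ)) s

lemma mem_latBoxFinset {s : ℕ} {x : Fin d → ℤ} : x ∈ latBoxFinset d s ↔ x ∈ latBox d s := by
  simp [latBoxFinset, latBox, abs_le]

lemma card_latBoxFinset (d s : ℕ) : (latBoxFinset d s).card = (2 * s + 1) ^ d := by
  simp only [latBoxFinset, Fintype.card_piFinset, Int.card_Icc, Finset.prod_const,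
    Finset.card_univ, Fintype.card_fin]
  congr 1
  omega

noncomputable def latSphereFinset (d s : ℕ) : Finset (Fin d → ℤ) :=
  {w ∈ latBoxFinset d s | ∃ i, |w i| = s}

lemma mem_latSphereFinset {s : ℕ} {x : Fin d → ℤ} :
    x ∈ latSphereFinset d s ↔ x ∈ latSphere d s := by
  simp [latSphereFinset, mem_latBoxFinset, latBox, latSphere]

lemma card_latSphereFinset_le (d s : ℕ) : (latSphereFinset d s).card ≤ (2 * s + 1) ^ d :=
  card_latBoxFinset d s ▸ Finset.card_filter_le _ _

lemma crossEvent_subset_biUnion_connEvent {s : ℕ} (hs : 0 < s) :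
    crossEvent d s ⊆ ⋃ aw ∈ latBoxFinset d s ×ˢ latSphereFinset d s,
      connEvent ((aw.1 + ·) '' latBox d s) aw.1 (aw.1 + aw.2) := by
  rintro ω ⟨A, hAo, hAc, ⟨a, haA, ha⟩, ⟨b, hbA, -, i, hbi⟩⟩
  have hfar : (s : ℤ) ≤ |b i - a i| := by
    have := abs_sub_abs_le_abs_sub (b i) (a i)
    have := ha i
    push_cast at hbi
    linarith
  obtain ⟨w, hw, hj⟩ := ((hAc a haA b hbA).mono hAo).exists_exit hs ⟨i, hfar⟩
  simp only [Set.mem_iUnion, Finset.mem_product, mem_latBoxFinset, mem_latSphereFinset]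
  exact ⟨(a, w), ⟨ha, hw⟩, hj⟩

lemma exists_mem_latSphere_div_le_measure_connEvent (hμ : ShiftInvariant μ) (hd : 0 < d)
    {s : ℕ} (hs : 0 < s) : ∃ w ∈ latSphere d s,
      μ (crossEvent d s) / (2 * s + 1) ^ (2 * d) ≤ μ (connEvent (latBox d s) 0 w) := by
  have hne : (latBoxFinset d s ×ˢ latSphereFinset d s).Nonempty :=
    ⟨(0, fun _ => s), by simp [mem_latBoxFinset, mem_latSphereFinset, latBox, latSphere,
      Fin.pos_iff_nonempty.mp hd]⟩
  obtain ⟨⟨a, w⟩, haw, h⟩ :=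
    exists_div_card_le_measure_of_subset_biUnion μ hne (crossEvent_subset_biUnion_connEvent hs)
  have hcard : ((latBoxFinset d s ×ˢ latSphereFinset d s).card : ℝ≥0∞) ≤
      (2 * s + 1) ^ (2 * d) := by
    have := Nat.mul_le_mul (card_latBoxFinset d s).le (card_latSphereFinset_le d s)
    rw [← Finset.card_product, ← pow_add, ← two_mul] at this
    exact_mod_cast this
  refine ⟨w, mem_latSphereFinset.mp (Finset.mem_product.mp haw).2, ?_⟩
  calc μ (crossEvent d s) / (2 * s + 1) ^ (2 * d)
      ≤ μ (crossEvent d s) / (latBoxFinset d s ×ˢ latSphereFinset d s).card :=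
        ENNReal.div_le_div_left hcard _
    _ ≤ _ := h
    _ = _ := by simpa using hμ.measure_connEvent a (latBox d s) 0 w

lemma crossEvent_one_subset_biUnion_connEvent :
    crossEvent d 1 ⊆ ⋃ e ∈ latBoxFinset d 1 ×ˢ (Finset.univ ×ˢ {1, -1}),
      connEvent {e.1, e.1 + Pi.single e.2.1 e.2.2} e.1 (e.1 + Pi.single e.2.1 e.2.2) := by
  rintro ω ⟨A, hAo, hAc, ⟨a, haA, ha⟩, ⟨b, hbA, -, i, hbi⟩⟩
  have hab : a ≠ b := by
    rintro rfl
    have := ha i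
    push_cast at hbi
    omega
  obtain ⟨c, ⟨hac, hcA⟩, -⟩ :=
    ((latJoined_iff.mp (hAc a haA b hbA)).2.cases_head).resolve_left hab
  obtain ⟨j, ζ, hζ, rfl⟩ := nnAdj_iff_eq_add_single.mp hac
  simp only [Set.mem_iUnion, Finset.mem_product, mem_latBoxFinset, Finset.mem_univ,
    Finset.mem_insert, Finset.mem_singleton]
  refine ⟨(a, j, ζ), ⟨ha, trivial, hζ⟩, latJoined_iff.mpr ⟨⟨by simp, hAo haA⟩, .single ?_⟩⟩
  exact ⟨hac, by simp, hAo hcA⟩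

lemma card_latBoxFinset_one_product_le (d : ℕ) :
    (latBoxFinset d 1 ×ˢ ((Finset.univ : Finset (Fin d)) ×ˢ ({1, -1} : Finset ℤ))).card ≤
      3 ^ (2 * d) := by
  have h2d : 2 * d ≤ 3 ^ d :=
    (Nat.mul_le_pow (by norm_num) d).trans (Nat.pow_le_pow_left (by norm_num) d)
  simp only [Finset.card_product, card_latBoxFinset, Finset.card_univ, Fintype.card_fin]
  rw [Finset.card_pair (by norm_num), two_mul d, pow_add]
  exact Nat.mul_le_mul_left _ (by linarith)

lemma SignedPermInvariant.measure_connEvent_pair_eq (hμ : SignedPermInvariant μ)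
    {j j' : Fin d} {ζ ζ' : ℤ} (hζ : ζ = 1 ∨ ζ = -1) (hζ' : ζ' = 1 ∨ ζ' = -1) :
    μ (connEvent {0, Pi.single j' ζ'} 0 (Pi.single j' ζ')) =
      μ (connEvent {0, Pi.single j ζ} 0 (Pi.single j ζ)) := by
  set ε : Fin d → ℤ := fun k => if k = j then ζ * ζ' else 1
  have hε : ∀ k, ε k = 1 ∨ ε k = -1 := fun k => by
    by_cases hk : k = j <;> rcases hζ with rfl | rfl <;> rcases hζ' with rfl | rfl <;>
      simp [ε, hk]
  have hg : signedPerm (Equiv.swap j j') ε hε (Pi.single j' ζ') = Pi.single j ζ := by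
    rw [signedPerm_single]
    rcases hζ' with rfl | rfl <;> simp [ε]
  rw [← measure_connEvent_image (g := signedPerm (Equiv.swap j j') ε hε) nnAdj_signedPerm
    (hμ _ _ hε), Set.image_pair, signedPerm_zero, hg]

lemma div_le_measure_connEvent_pair (hshift : ShiftInvariant μ) (hsym : SignedPermInvariant μ)
    (j : Fin d) {ζ : ℤ} (hζ : ζ = 1 ∨ ζ = -1) :
    μ (crossEvent d 1) / 3 ^ (2 * d) ≤ μ (connEvent {0, Pi.single j ζ} 0 (Pi.single j ζ)) := by
  set S : Finset ((Fin d → ℤ) × Fin d × ℤ) := latBoxFinset d 1 ×ˢ (Finset.univ ×ˢ {1, -1})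
  have hS : S.Nonempty := ⟨(0, j, ζ), by simpa [S, mem_latBoxFinset, latBox] using hζ⟩
  obtain ⟨⟨a, j', ζ'⟩, he, h⟩ :=
    exists_div_card_le_measure_of_subset_biUnion μ hS crossEvent_one_subset_biUnion_connEvent
  have hζ' : ζ' = 1 ∨ ζ' = -1 := by simpa [S] using (Finset.mem_product.mp he).2
  calc μ (crossEvent d 1) / 3 ^ (2 * d)
      ≤ μ (crossEvent d 1) / S.card :=
        ENNReal.div_le_div_left (by exact_mod_cast card_latBoxFinset_one_product_le d) _
    _ ≤ _ := h
    _ = μ (connEvent {0, Pi.single j' ζ'} 0 (Pi.single j' ζ')) := by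
        simpa [Set.image_pair] using
          hshift.measure_connEvent a {0, Pi.single j' ζ'} 0 (Pi.single j' ζ')
    _ = _ := hsym.measure_connEvent_pair_eq hζ hζ'

lemma latBox_mono {r s : ℕ} (h : r ≤ s) : latBox d r ⊆ latBox d s :=
  fun _ hx i => (hx i).trans (by exact_mod_cast h)

lemma add_mem_latBox {z v : Fin d → ℤ} {r s : ℕ} (hz : z ∈ latBox d r) (hv : v ∈ latBox d s) :
    z + v ∈ latBox d (r + s) := fun i => by
  push_cast
  exact (abs_add_le _ _).trans (add_le_add (hz i) (hv i))

lemma image_add_latBox_subset {z : Fin d → ℤ} {r s R : ℕ} (hz : z ∈ latBox d r)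
    (h : r + s ≤ R) : (z + ·) '' latBox d s ⊆ latBox d R := by
  rintro _ ⟨v, hv, rfl⟩
  exact latBox_mono h (add_mem_latBox hz hv)

lemma single_mem_latBox (i : Fin d) {c : ℤ} {s : ℕ} (h : |c| ≤ s) :
    Pi.single i c ∈ latBox d s := fun k => by
  by_cases hk : k = i
  · subst hk; simpa using h
  · simp [hk]

lemma add_single_mem_latBox {z : Fin d → ℤ} {r : ℕ} {i : Fin d} {c : ℤ} (hz : z ∈ latBox d r)
    (h : |z i + c| ≤ r) : z + Pi.single i c ∈ latBox d r := fun k => by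
  by_cases hk : k = i
  · subst hk; simpa using h
  · simpa [hk] using hz k

lemma connEvent_subset_connEvent_self (A : Set (Fin d → ℤ)) (x y : Fin d → ℤ) :
    connEvent A x y ⊆ connEvent A x x :=
  fun _ h => latJoined_self h.mem_left

lemma div_le_measure_connEvent_add_single (hshift : ShiftInvariant μ)
    (hsym : SignedPermInvariant μ) {A : Set (Fin d → ℤ)} {z : Fin d → ℤ} (j : Fin d)
    {ζ : ℤ} (hζ : ζ = 1 ∨ ζ = -1) (hz : z ∈ A) (hz' : z + Pi.single j ζ ∈ A) :
    μ (crossEvent d 1) / 3 ^ (2 * d) ≤ μ (connEvent A z (z + Pi.single j ζ)) :=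
  calc μ (crossEvent d 1) / 3 ^ (2 * d)
      ≤ μ (connEvent {0, Pi.single j ζ} 0 (Pi.single j ζ)) :=
        div_le_measure_connEvent_pair hshift hsym j hζ
    _ = μ (connEvent {z, z + Pi.single j ζ} z (z + Pi.single j ζ)) := by
        simpa [Set.image_pair] using (hshift.measure_connEvent z {0, Pi.single j ζ} 0 _).symm
    _ ≤ _ := measure_mono (connEvent_mono (Set.pair_subset hz hz') _ _)

lemma div_le_measure_connEvent_add_single_of_abs_le_one (hshift : ShiftInvariant μ)
    (hsym : SignedPermInvariant μ) {r : ℕ} (hr : 0 < r) {z : Fin d → ℤ}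
    (hz : z ∈ latBox d r) (i : Fin d) {ρ : ℤ} (hρ : |ρ| ≤ 1) :
    μ (crossEvent d 1) / 3 ^ (2 * d) ≤ μ (connEvent (latBox d (2 * r)) z (z + Pi.single i ρ)) := by
  have hmem : ∀ c : ℤ, |c| ≤ 1 → z + Pi.single i c ∈ latBox d (2 * r) := fun c hc =>
    latBox_mono (by omega) (add_mem_latBox hz (single_mem_latBox i (s := 1) (by simpa using hc)))
  have hz2 : z ∈ latBox d (2 * r) := by simpa using hmem 0 (by simp)
  rcases abs_le.mp hρ with ⟨h1, h2⟩
  obtain rfl | hρ' : ρ = 0 ∨ ρ = 1 ∨ ρ = -1 := by omega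
  · simpa using (div_le_measure_connEvent_add_single hshift hsym i (Or.inl rfl) hz2
      (hmem 1 (by simp))).trans (measure_mono (connEvent_subset_connEvent_self _ _ _))
  · exact div_le_measure_connEvent_add_single hshift hsym i hρ' hz2 (hmem ρ hρ)

lemma measure_connEvent_latBox_le_signedPerm (hshift : ShiftInvariant μ)
    (hsym : SignedPermInvariant μ) {A : Set (Fin d → ℤ)} {u : Fin d → ℤ} {s : ℕ}
    (hA : (u + ·) '' latBox d s ⊆ A) (σ : Equiv.Perm (Fin d)) {ε : Fin d → ℤ}
    (hε : ∀ i, ε i = 1 ∨ ε i = -1) (w : Fin d → ℤ) :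
    μ (connEvent (latBox d s) 0 w) ≤ μ (connEvent A u (u + signedPerm σ ε hε w)) := by
  rw [← hsym.measure_connEvent_latBox s w (hε := hε)]
  calc μ (connEvent (latBox d s) 0 (signedPerm σ ε hε w))
      = μ (connEvent ((u + ·) '' latBox d s) u (u + signedPerm σ ε hε w)) := by
        simpa using (hshift.measure_connEvent u (latBox d s) 0 (signedPerm σ ε hε w)).symm
    _ ≤ _ := measure_mono (connEvent_mono hA _ _)

lemma sq_div_le_measure_connEvent_add_single_two_mul (hPA : PosAssoc μ)
    (hshift : ShiftInvariant μ) (hsym : SignedPermInvariant μ) {p : ℝ≥0∞}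
    (hp : ∀ s, 0 < s → p ≤ μ (crossEvent d s)) {r : ℕ} {z : Fin d → ℤ} (hz : z ∈ latBox d r)
    (i : Fin d) {q : ℤ} (hq : q ≠ 0) (hqr : 2 * |q| ≤ r) :
    (p / (2 * r + 1) ^ (2 * d)) ^ 2 ≤
      μ (connEvent (latBox d (2 * r)) z (z + Pi.single i (2 * q))) := by
  set s := q.natAbs
  have hs : 0 < s := Int.natAbs_pos.mpr hq
  have hsr : 2 * s ≤ r := by have := Int.natCast_natAbs q; omega
  obtain ⟨w, ⟨hw, i₀, hi₀⟩, hwμ⟩ := exists_mem_latSphere_div_le_measure_connEvent hshift i.pos hs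
  have ht : p / (2 * r + 1) ^ (2 * d) ≤ μ (connEvent (latBox d s) 0 w) := by
    refine le_trans ?_ hwμ
    gcongr
    · exact hp s hs
    · exact_mod_cast hsr.trans' (by omega)
  obtain ⟨ε₁, ε₂, h₁, h₂, hsum⟩ :=
    exists_signedPerm_add_eq_single (q := q) (hi₀.trans (Int.natCast_natAbs q)) i
  set v := signedPerm (Equiv.swap i i₀) ε₁ h₁ w
  have hv : z + v ∈ latBox d (r + s) :=
    add_mem_latBox hz (signedPerm_mem_latBox_iff.mpr hw)
  have hstep₁ := measure_connEvent_latBox_le_signedPerm hshift hsym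
    (image_add_latBox_subset hz (s := s) (R := 2 * r) (by omega)) (Equiv.swap i i₀) h₁ w
  have hstep₂ := measure_connEvent_latBox_le_signedPerm hshift hsym
    (image_add_latBox_subset hv (s := s) (R := 2 * r) (by omega)) (Equiv.swap i i₀) h₂ w
  rw [add_assoc, hsum] at hstep₂
  rw [sq]
  exact hPA.mul_le_measure_connEvent (ht.trans hstep₁) (ht.trans hstep₂)

lemma pow_three_div_le_measure_connEvent_add_single (hPA : PosAssoc μ)
    (hshift : ShiftInvariant μ) (hsym : SignedPermInvariant μ) {p : ℝ≥0∞} (hp₁ : p ≤ 1)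
    (hp : ∀ s, 0 < s → p ≤ μ (crossEvent d s)) {r : ℕ} (hr : 0 < r) {z : Fin d → ℤ}
    (hz : z ∈ latBox d r) (i : Fin d) {Δ : ℤ} (hΔ : |Δ| ≤ r) (hzΔ : |z i + Δ| ≤ r) :
    (p / (2 * r + 1) ^ (2 * d)) ^ 3 ≤
      μ (connEvent (latBox d (2 * r)) z (z + Pi.single i Δ)) := by
  set t := p / (2 * r + 1) ^ (2 * d)
  have ht₁ : t ≤ 1 :=
    (ENNReal.div_le_of_le_mul (le_mul_of_one_le_right' (one_le_pow₀ (by simp)))).trans hp₁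
  have ht : t ≤ μ (crossEvent d 1) / 3 ^ (2 * d) :=
    ENNReal.div_le_div (hp 1 one_pos)
      (pow_le_pow_left₀ zero_le (by exact_mod_cast (by omega : 3 ≤ 2 * r + 1)) _)
  obtain ⟨ρ, q, rfl, hρ, hq, hmid⟩ :
      ∃ ρ q : ℤ, Δ = ρ + 2 * q ∧ |ρ| ≤ 1 ∧ 2 * |q| ≤ r ∧ |z i + ρ| ≤ r := by
    rw [abs_le] at hΔ hzΔ
    have hzi := abs_le.mp (hz i)
    rcases le_total 0 Δ with h | h
    · refine ⟨Δ % 2, Δ / 2, by omega, abs_le.mpr ⟨by omega, by omega⟩, ?_,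
        abs_le.mpr ⟨by omega, by omega⟩⟩
      rw [abs_of_nonneg (by omega)]; omega
    · refine ⟨-(-Δ % 2), -(-Δ / 2), by omega, abs_le.mpr ⟨by omega, by omega⟩, ?_,
        abs_le.mpr ⟨by omega, by omega⟩⟩
      rw [abs_of_nonpos (by omega)]; omega
  have h₁ := ht.trans (div_le_measure_connEvent_add_single_of_abs_le_one hshift hsym hr hz i hρ)
  rcases eq_or_ne q 0 with rfl | hq₀
  · simpa using (pow_le_of_le_one zero_le ht₁ (by norm_num)).trans h₁
  · have h₂ := sq_div_le_measure_connEvent_add_single_two_mul hPA hshift hsym hp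
      (add_single_mem_latBox hz hmid) i hq₀ hq
    rw [add_assoc, ← Pi.single_add] at h₂
    rw [pow_succ']
    exact hPA.mul_le_measure_connEvent h₁ h₂

lemma pow_six_div_le_measure_connEvent_update (hPA : PosAssoc μ)
    (hshift : ShiftInvariant μ) (hsym : SignedPermInvariant μ) {p : ℝ≥0∞} (hp₁ : p ≤ 1)
    (hp : ∀ s, 0 < s → p ≤ μ (crossEvent d s)) {r : ℕ} (hr : 0 < r) {z : Fin d → ℤ}
    (hz : z ∈ latBox d r) (i : Fin d) {c : ℤ} (hc : |c| ≤ r) :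
    (p / (2 * r + 1) ^ (2 * d)) ^ 6 ≤
      μ (connEvent (latBox d (2 * r)) z (Function.update z i c)) := by
  have hupdate : Function.update z i c = z + Pi.single i (c - z i) := by
    funext k
    by_cases hk : k = i
    · subst hk; simp
    · simp [hk]
  set Δ := c - z i
  have hzi := abs_le.mp (hz i)
  rw [abs_le] at hc
  have hmid : |z i + Δ / 2| ≤ r := abs_le.mpr ⟨by omega, by omega⟩
  have h₁ := pow_three_div_le_measure_connEvent_add_single hPA hshift hsym hp₁ hp hr hz i
    (Δ := Δ / 2) (abs_le.mpr ⟨by omega, by omega⟩) hmid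
  have h₂ := pow_three_div_le_measure_connEvent_add_single hPA hshift hsym hp₁ hp hr
    (add_single_mem_latBox hz hmid) i (Δ := Δ - Δ / 2) (abs_le.mpr ⟨by omega, by omega⟩)
    (by
      rw [Pi.add_apply, Pi.single_eq_same, add_add_sub_cancel]
      exact abs_le.mpr ⟨by omega, by omega⟩)
  rw [add_assoc, ← Pi.single_add, add_sub_cancel] at h₂
  rw [hupdate, show 6 = 3 + 3 from rfl, pow_add]
  exact hPA.mul_le_measure_connEvent h₁ h₂

lemma pow_div_le_measure_connEvent (hPA : PosAssoc μ) (hshift : ShiftInvariant μ)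
    (hsym : SignedPermInvariant μ) (hd : 0 < d) {p : ℝ≥0∞} (hp₁ : p ≤ 1)
    (hp : ∀ s, 0 < s → p ≤ μ (crossEvent d s)) {r : ℕ} (hr : 0 < r) {x y : Fin d → ℤ}
    (hx : x ∈ latBox d r) (hy : y ∈ latBox d r) :
    (p / (2 * r + 1) ^ (2 * d)) ^ (6 * d) ≤ μ (connEvent (latBox d (2 * r)) x y) := by
  set P : ℕ → Fin d → ℤ := fun k j => if (j : ℕ) < k then y j else x j
  have hP : ∀ k, P k ∈ latBox d r := fun k j => by
    simp only [P]; split_ifs; exacts [hy j, hx j]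
  have hsucc : ∀ k (hk : k < d), P (k + 1) = Function.update (P k) ⟨k, hk⟩ (y ⟨k, hk⟩) := by
    intro k hk
    funext j
    by_cases hj : j = ⟨k, hk⟩
    · subst hj; simp [P]
    · have : (j : ℕ) ≠ k := fun h => hj (Fin.ext h)
      simp only [P, Function.update_of_ne hj]
      split_ifs <;> omega
  have h := hPA.pow_le_measure_connEvent (A := latBox d (2 * r)) (p := P) hd fun k hk => by
    rw [hsucc k hk]
    exact pow_six_div_le_measure_connEvent_update hPA hshift hsym hp₁ hp hr (hP k) _ (hy _)
  simpa [P, ← pow_mul, mul_comm] using h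

lemma ofReal_mul_rpow_neg_le_pow_div {κ : ℝ} (hκ : 0 ≤ κ) {d r : ℕ} (hr : 1 ≤ r) :
    ENNReal.ofReal (κ ^ (6 * d) / 3 ^ (12 * d ^ 2) * (r : ℝ) ^ (-((12 * d ^ 2 : ℕ) : ℝ))) ≤
      (ENNReal.ofReal κ / (2 * r + 1) ^ (2 * d)) ^ (6 * d) := by
  have hr' : (1 : ℝ) ≤ r := by exact_mod_cast hr
  have key : κ ^ (6 * d) / 3 ^ (12 * d ^ 2) * (r : ℝ) ^ (-((12 * d ^ 2 : ℕ) : ℝ)) ≤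
      (κ / (2 * r + 1) ^ (2 * d)) ^ (6 * d) :=
    calc κ ^ (6 * d) / 3 ^ (12 * d ^ 2) * (r : ℝ) ^ (-((12 * d ^ 2 : ℕ) : ℝ))
        = κ ^ (6 * d) / (3 * r) ^ (12 * d ^ 2) := by
          rw [Real.rpow_neg (by positivity), Real.rpow_natCast, mul_pow]; field_simp
      _ ≤ κ ^ (6 * d) / (2 * r + 1) ^ (12 * d ^ 2) := by
          gcongr; linarith
      _ = (κ / (2 * r + 1) ^ (2 * d)) ^ (6 * d) := by rw [div_pow, ← pow_mul]; ring_nf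
  refine (ENNReal.ofReal_le_ofReal key).trans_eq ?_
  rw [ENNReal.ofReal_pow (by positivity), ENNReal.ofReal_div_of_pos (by positivity),
    ENNReal.ofReal_pow (by positivity)]
  norm_num [ENNReal.ofReal_add, ENNReal.ofReal_mul]

/-- polynomial lower bound on two-point connection probabilities inside
`B_{2r}`, for positively associated, translation- and lattice-symmetry-invariant
probability measures with uniformly non-degenerate box-to-sphere crossings. -/
theorem two_point_polynomial_lower_bound (d : ℕ) (hd : 2 ≤ d) :
    ∃ C : ℝ, ∀ κ : ℝ, 0 < κ → ∃ c : ℝ, 0 < c ∧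
      ∀ μ : Measure ((Fin d → ℤ) → Bool), IsProbabilityMeasure μ → PosAssoc μ →
        (∀ v : Fin d → ℤ,
          Measure.map (fun ω : (Fin d → ℤ) → Bool => fun x => ω (x + v)) μ = μ) →
        (∀ σ : Equiv.Perm (Fin d), ∀ ε : Fin d → ℤ, (∀ i, ε i = 1 ∨ ε i = -1) →
          Measure.map
            (fun ω : (Fin d → ℤ) → Bool => fun x => ω (fun i => ε i * x (σ i))) μ = μ) →
        (∀ r : ℕ, 1 ≤ r → ENNReal.ofReal κ ≤ μ (crossEvent d r)) →
        ∀ r : ℕ, 1 ≤ r → ∀ x y : Fin d → ℤ, x ∈ latBox d r → y ∈ latBox d r →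
          ENNReal.ofReal (c * (r : ℝ) ^ (-C)) ≤ μ (connEvent (latBox d (2 * r)) x y) := by
  refine ⟨(12 * d ^ 2 : ℕ), fun κ hκ => ⟨κ ^ (6 * d) / 3 ^ (12 * d ^ 2), by positivity, ?_⟩⟩
  intro μ _ hPA hshift hsym hcross r hr x y hx hy
  have hp₁ : ENNReal.ofReal κ ≤ 1 := (hcross 1 le_rfl).trans prob_le_one
  exact (ofReal_mul_rpow_neg_le_pow_div hκ.le hr).trans
    (pow_div_le_measure_connEvent hPA hshift hsym (by omega) hp₁ hcross hr hx hy)
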